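/- Let (A, ⊠, I) be a monoidal abelian category admitting sequential colimits, whose monoidal product preserves sequential colimits and reflexive coequalizers. For an object V set V₊ = I ⊕ V and Vₙ = V₊^{⊠n}. Define τ : V → V₂ as the composite V ≅ (I⊠V) ⊕ (V⊠I) → (I⊕V)⊠(I⊕V) given by η⊠i_V − i_V⊠η, and for 0 ≤ i ≤ n−2 let R_{i,n−i−2} ⊆ Vₙ be the image of V_i ⊠ (V̲ ⊕ V₂) ⊠ V_{n−i−2} under V_i ⊠ (τ + id_{V₂}) ⊠ V_{n−i−2}. Then the degeneracy maps η_i : Vₙ → V_{n+1} (inserting the unit at position i) all induce one and the same map η̃ on the quotients Ṽₙ = Vₙ / Σ_i R_{i,n−i−2}. -/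

import Mathlib

open CategoryTheory Limits MonoidalCategory

section FreeMonoidConstruction

variable {𝒜 : Type*} [Category 𝒜] [Abelian 𝒜] [MonoidalCategory 𝒜]

/-- A functor preserves reflexive coequalizers if it preserves coequalizers of
every reflexive pair. -/
def PreservesReflexiveCoequalizersFun {𝒜 : Type*} [Category 𝒜] {ℬ : Type*} [Category ℬ]
    (Γ : 𝒜 ⥤ ℬ) : Prop :=
  ∀ ⦃X Y : 𝒜⦄ (d₀ d₁ : X ⟶ Y), IsReflexivePair d₀ d₁ →
    PreservesColimit (parallelPair d₀ d₁) Γ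

/-- Tensor powers: `pow W n = W^{⊠n}`, with `pow W 0 = I`. -/
def pow (W : 𝒜) : ℕ → 𝒜
  | 0 => 𝟙_ 𝒜
  | n + 1 => W ⊗ pow W n

/-- The concatenation isomorphism `W^{⊠n} ⊠ W^{⊠m} ≅ W^{⊠(n+m)}`. -/
def concat (W : 𝒜) : ∀ n m : ℕ, pow W n ⊗ pow W m ≅ pow W (n + m)
  | 0, m => λ_ (pow W m) ≪≫ eqToIso (congrArg (pow W) (Nat.zero_add m).symm)
  | n + 1, m =>
    α_ W (pow W n) (pow W m) ≪≫ whiskerLeftIso W (concat W n m) ≪≫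
      eqToIso (congrArg (pow W) (Nat.succ_add n m).symm)

/-- The augmented object `V₊ = I ⊕ V`. -/
noncomputable def Vp (V : 𝒜) : 𝒜 := 𝟙_ 𝒜 ⊞ V

/-- `Vₙ = (V₊)^{⊠ n}`. -/
noncomputable def Vob (V : 𝒜) (n : ℕ) : 𝒜 := pow (Vp V) n

/-- The unit `η : I ⟶ V₊`. -/
noncomputable def etaV (V : 𝒜) : 𝟙_ 𝒜 ⟶ Vp V := biprod.inl

/-- The degeneracy map `η_i : Vₙ ⟶ V_{n+1}` inserting the unit at position `i`. -/
noncomputable def ins (V : 𝒜) : ∀ n : ℕ, ℕ → (Vob V n ⟶ Vob V (n + 1))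
  | n, 0 => (λ_ (Vob V n)).inv ≫ (etaV V ▷ Vob V n)
  | 0, _ + 1 => (λ_ (Vob V 0)).inv ≫ (etaV V ▷ Vob V 0)
  | n + 1, i + 1 => Vp V ◁ ins V n i

/-- The map `τ : V ⟶ V₂`, given by `η ⊠ i_V − i_V ⊠ η`. -/
noncomputable def tauV (V : 𝒜) : V ⟶ Vob V 2 :=
  ((λ_ V).inv ≫ ((biprod.inl : 𝟙_ 𝒜 ⟶ Vp V) ⊗ₘ (biprod.inr : V ⟶ Vp V)) -
    (ρ_ V).inv ≫ ((biprod.inr : V ⟶ Vp V) ⊗ₘ (biprod.inl : 𝟙_ 𝒜 ⟶ Vp V))) ≫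
    (Vp V ◁ (ρ_ (Vp V)).inv)

/-- The source of the relation `R_{i,j} ⊆ V_{i+2+j}`: the multilinear part
`V_i ⊠ (V̲ ⊕ V₂) ⊠ V_j`, i.e. the kernel of `V_i ⊠ π_{V₂} ⊠ V_j`. -/
noncomputable def Kob (V : 𝒜) (i j : ℕ) : 𝒜 :=
  kernel (Vob V i ◁ ((biprod.snd : V ⊞ Vob V 2 ⟶ Vob V 2) ▷ Vob V j))

/-- The map whose image is the relation `R_{i,j}`: the composite of the
multilinear part inclusion with `V_i ⊠ (τ + id_{V₂}) ⊠ V_j` and the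
concatenation isomorphisms. -/
noncomputable def rmap (V : 𝒜) (i j : ℕ) : Kob V i j ⟶ Vob V (i + (2 + j)) :=
  kernel.ι _ ≫
    (Vob V i ◁ (biprod.desc (tauV V) (𝟙 (Vob V 2)) ▷ Vob V j)) ≫
    (Vob V i ◁ (concat (Vp V) 2 j).hom) ≫ (concat (Vp V) i (2 + j)).hom

/-- The total relation map `⊕_{i=0}^{n-2} R_{i,n-i-2} ⟶ Vₙ`. -/
noncomputable def bigR (V : 𝒜) (n : ℕ) :
    (∐ fun i : Fin (n - 1) => Kob V i.val (n - 2 - i.val)) ⟶ Vob V n :=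
  Sigma.desc fun i =>
    rmap V i.val (n - 2 - i.val) ≫
      eqToHom (congrArg (Vob V) (by have := i.isLt; omega))

/-- The quotient `Ṽₙ = Vₙ / (Σᵢ R_{i,n-i-2})`. -/
noncomputable def Vtil (V : 𝒜) (n : ℕ) : 𝒜 := cokernel (bigR V n)

/-- The quotient map `πₙ : Vₙ ⟶ Ṽₙ`. -/
noncomputable def projV (V : 𝒜) (n : ℕ) : Vob V n ⟶ Vtil V n := cokernel.π _

end FreeMonoidConstruction

/-! On `V₊ ⊠ V₊` one has `η ⊠ 1 − 1 ⊠ η = τ ∘ π_V`. Whiskered into the slots `i, i+1` of `Vₙ`,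
this shows that `η_i − η_{i+1}` lands in `R_{i,n−i−1}`, so modulo the relations every `η_i` agrees
with the last degeneracy `η_n`. Inserting the unit in the last slot commutes with
`V_j ⊠ (τ + id) ⊠ V_m`, so `η_n` carries `R_{j,m}` into `R_{j,m+1}` and descends to the quotients. -/

section TensorPowers

variable {𝒜 : Type*} [Category 𝒜] [MonoidalCategory 𝒜] (W : 𝒜)

lemma concat_zero_hom (m : ℕ) :
    (concat W 0 m).hom = (λ_ (pow W m)).hom ≫ eqToHom (congrArg (pow W) (Nat.zero_add m).symm) :=
  rfl

lemma concat_succ_hom (n m : ℕ) :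
    (concat W (n + 1) m).hom = (α_ W (pow W n) (pow W m)).hom ≫ (W ◁ (concat W n m).hom) ≫
      eqToHom (congrArg (pow W) (Nat.succ_add n m).symm) :=
  rfl

lemma concat_zero_conj {m m' : ℕ} (f : pow W m ⟶ pow W m') :
    (concat W 0 m).inv ≫ (pow W 0 ◁ f) ≫ (concat W 0 m').hom =
      eqToHom (by rw [Nat.zero_add]) ≫ f ≫ eqToHom (by rw [Nat.zero_add]) := by
  simp [concat, pow]

lemma concat_succ_conj (i : ℕ) {m m' : ℕ} (f : pow W m ⟶ pow W m') :
    (concat W (i + 1) m).inv ≫ (pow W (i + 1) ◁ f) ≫ (concat W (i + 1) m').hom =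
      eqToHom (by rw [Nat.succ_add]; rfl) ≫
        (W ◁ ((concat W i m).inv ≫ (pow W i ◁ f) ≫ (concat W i m').hom)) ≫
        eqToHom (by rw [Nat.succ_add]; rfl) := by
  simp only [pow, concat, Iso.trans_inv, whiskerLeftIso_inv, Category.assoc, tensor_whiskerLeft,
    Iso.trans_hom, whiskerLeftIso_hom, Iso.inv_hom_id_assoc, whiskerLeft_comp]
  rfl

lemma whiskerLeft_eqToHom_comp_concat_hom (i : ℕ) {a b : ℕ} (h : a = b) :
    (pow W i ◁ eqToHom (congrArg (pow W) h)) ≫ (concat W i b).hom =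
      (concat W i a).hom ≫ eqToHom (congrArg (pow W) (congrArg (i + ·) h)) := by
  subst h; simp

lemma whiskerRight_comp_concat_two_hom (k : ℕ) {X : 𝒜} (p : X ⟶ W ⊗ W) :
    ((p ≫ W ◁ (ρ_ W).inv) ▷ pow W k) ≫ (concat W 2 k).hom =
      (p ▷ pow W k) ≫ (α_ W W (pow W k)).hom ≫ eqToHom (congrArg (pow W) (Nat.add_comm k 2)) := by
  rw [concat_succ_hom W 1 k, concat_succ_hom W 0 k, concat_zero_hom]
  simp only [pow, whiskerLeft_comp, whiskerLeft_eqToHom, comp_whiskerRight, Category.assoc]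
  have coh : ((W ◁ (ρ_ W).inv) ▷ pow W k) ≫ (α_ W (W ⊗ 𝟙_ 𝒜) (pow W k)).hom ≫
      (W ◁ (α_ W (𝟙_ 𝒜) (pow W k)).hom) ≫ (W ◁ W ◁ (λ_ (pow W k)).hom) =
      (α_ W W (pow W k)).hom := by monoidal
  rw [reassoc_of% coh]
  congr 2
  erw [whiskerLeft_eqToHom]
  simp only [eqToHom_trans_assoc]
  exact eqToHom_trans _ _

end TensorPowers

section Degeneracies

variable {𝒜 : Type*} [Category 𝒜] [Abelian 𝒜] [MonoidalCategory 𝒜] (V : 𝒜)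

/-- `concat (Vp V)` retyped with `Vob V`, so that rewriting sees matching objects. -/
noncomputable abbrev concatV (i m : ℕ) : Vob V i ⊗ Vob V m ≅ Vob V (i + m) := concat (Vp V) i m

noncomputable def tensorToVobTwo : Vp V ⊗ Vp V ⟶ Vob V 2 := Vp V ◁ (ρ_ (Vp V)).inv

lemma ins_zero (n : ℕ) : ins V n 0 = (λ_ (Vob V n)).inv ≫ (etaV V ▷ Vob V n) := by
  cases n <;> rfl

lemma ins_succ_succ (n i : ℕ) : ins V (n + 1) (i + 1) = Vp V ◁ ins V n i := rfl

noncomputable def headMap (k : ℕ) (p : Vp V ⟶ Vp V ⊗ Vp V) : Vob V (k + 1) ⟶ Vob V (k + 1 + 1) :=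
  (p ▷ Vob V k) ≫ (α_ (Vp V) (Vp V) (Vob V k)).hom

noncomputable def headMapTwo (k : ℕ) (f : Vp V ⟶ Vob V 2) : Vob V (k + 1) ⟶ Vob V (2 + k) :=
  (f ▷ Vob V k) ≫ (concatV V 2 k).hom

lemma ins_succ_zero (k : ℕ) : ins V (k + 1) 0 = headMap V k ((λ_ (Vp V)).inv ≫ etaV V ▷ Vp V) := by
  rw [ins_zero]
  show (λ_ (Vp V ⊗ Vob V k)).inv ≫ (etaV V ▷ (Vp V ⊗ Vob V k)) =
    (((λ_ (Vp V)).inv ≫ etaV V ▷ Vp V) ▷ Vob V k) ≫ (α_ (Vp V) (Vp V) (Vob V k)).hom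
  monoidal

lemma ins_succ_one (k : ℕ) : ins V (k + 1) 1 = headMap V k ((ρ_ (Vp V)).inv ≫ Vp V ◁ etaV V) := by
  show Vp V ◁ ins V k 0 =
    (((ρ_ (Vp V)).inv ≫ Vp V ◁ etaV V) ▷ Vob V k) ≫ (α_ (Vp V) (Vp V) (Vob V k)).hom
  rw [ins_zero]
  monoidal

lemma headMap_eq_headMapTwo (k : ℕ) (p : Vp V ⟶ Vp V ⊗ Vp V) :
    headMap V k p = headMapTwo V k (p ≫ tensorToVobTwo V) ≫
      eqToHom (congrArg (Vob V) (by omega : 2 + k = k + 1 + 1)) := by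
  rw [← cancel_mono (eqToHom (congrArg (Vob V) (by omega : k + 1 + 1 = 2 + k))), Category.assoc,
    eqToHom_trans, eqToHom_refl, Category.comp_id]
  exact (whiskerRight_comp_concat_two_hom (Vp V) k p).trans (Category.assoc _ _ _).symm |>.symm

lemma ins_eq_eqToHom_comp {a b : ℕ} (h : a = b) (i : ℕ) :
    ins V a i = eqToHom (congrArg (Vob V) h) ≫ ins V b i ≫ eqToHom (by rw [h]) := by
  subst h; simp

lemma ins_add (i m j : ℕ) :
    ins V (i + m) (i + j) = (concatV V i m).inv ≫ (Vob V i ◁ ins V m j) ≫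
      (concatV V i (m + 1)).hom := by
  induction i with
  | zero =>
    rw [ins_eq_eqToHom_comp V (Nat.zero_add m), Nat.zero_add j]
    exact (concat_zero_conj (Vp V) (ins V m j)).symm
  | succ i ih =>
    rw [ins_eq_eqToHom_comp V (Nat.succ_add i m), Nat.succ_add i j, ins_succ_succ, ih]
    exact (concat_succ_conj (Vp V) i (ins V m j)).symm

lemma biprod_snd_comp_tauV :
    biprod.snd ≫ tauV V = ((λ_ (Vp V)).inv ≫ etaV V ▷ Vp V - (ρ_ (Vp V)).inv ≫ Vp V ◁ etaV V) ≫
      tensorToVobTwo V := by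
  have h : (biprod.snd : 𝟙_ 𝒜 ⊞ V ⟶ V) ≫ ((λ_ V).inv ≫ (biprod.inl ⊗ₘ biprod.inr) -
      (ρ_ V).inv ≫ (biprod.inr ⊗ₘ biprod.inl)) =
      (λ_ _).inv ≫ biprod.inl ▷ (𝟙_ 𝒜 ⊞ V) - (ρ_ _).inv ≫ (𝟙_ 𝒜 ⊞ V) ◁ biprod.inl := by
    apply biprod.hom_ext'
    · rw [biprod.inl_snd_assoc, zero_comp, Preadditive.comp_sub,
        leftUnitor_inv_naturality_assoc, rightUnitor_inv_naturality_assoc, unitors_inv_equal,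
        ← MonoidalCategory.tensorHom_def', ← MonoidalCategory.tensorHom_def, sub_self]
    · rw [biprod.inr_snd_assoc, Preadditive.comp_sub,
        leftUnitor_inv_naturality_assoc, rightUnitor_inv_naturality_assoc,
        MonoidalCategory.tensorHom_def', MonoidalCategory.tensorHom_def]
  exact (Category.assoc _ _ _).symm.trans (congrArg (· ≫ Vp V ◁ (ρ_ (Vp V)).inv) h)

end Degeneracies

section Relations

variable {𝒜 : Type*} [Category 𝒜] [Abelian 𝒜] [MonoidalCategory 𝒜] (V : 𝒜)

noncomputable def relMap (i k : ℕ) : Vob V i ⊗ ((V ⊞ Vob V 2) ⊗ Vob V k) ⟶ Vob V (i + (2 + k)) :=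
  (Vob V i ◁ (biprod.desc (tauV V) (𝟙 (Vob V 2)) ▷ Vob V k)) ≫
    (Vob V i ◁ (concatV V 2 k).hom) ≫ (concatV V i (2 + k)).hom

lemma rmap_comp_projV (i k : ℕ) : rmap V i k ≫ projV V (i + (2 + k)) = 0 := by
  have h := Sigma.ι (fun b : Fin (i + (2 + k) - 1) => Kob V b.val (i + (2 + k) - 2 - b.val))
    ⟨i, by omega⟩ ≫= cokernel.condition (bigR V (i + (2 + k)))
  simp only [bigR, Sigma.ι_desc_assoc] at h
  -- `bigR` indexes this summand by `i + (2 + k) - 2 - i`, which is `k` only propositionally.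
  have h' : ∀ e : Vob V (i + (2 + (i + (2 + k) - 2 - i))) = Vob V (i + (2 + k)),
      rmap V i _ ≫ eqToHom e ≫ projV V (i + (2 + k)) = 0 := fun _ =>
    (Category.assoc _ _ _).symm.trans (h.trans comp_zero)
  rw [show i + (2 + k) - 2 - i = k by omega] at h'
  simpa using h' rfl

lemma comp_relMap_comp_projV (i k : ℕ) {D : 𝒜} (q : D ⟶ Vob V i ⊗ ((V ⊞ Vob V 2) ⊗ Vob V k))
    (hq : q ≫ (Vob V i ◁ ((biprod.snd : V ⊞ Vob V 2 ⟶ Vob V 2) ▷ Vob V k)) = 0) :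
    q ≫ relMap V i k ≫ projV V (i + (2 + k)) = 0 := by
  calc q ≫ relMap V i k ≫ projV V (i + (2 + k))
      = kernel.lift _ q hq ≫ (kernel.ι _ ≫ relMap V i k) ≫ projV V (i + (2 + k)) := by
        rw [Category.assoc, kernel.lift_ι_assoc]
    _ = 0 := (kernel.lift _ q hq ≫= rmap_comp_projV V i k).trans comp_zero

/-- The tensor product is not assumed additive, so the difference of `f` and `g` is never
whiskered: instead `biprod.lift h g` and `biprod.lift 0 g` agree after `π_{V₂}`, hence their
difference factors through the multilinear part. -/
lemma whiskerLeft_comp_projV_eq_of_eq_comp_tauV_add (i k : ℕ) {X : 𝒜} (f g : X ⟶ Vob V 2)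
    (h : X ⟶ V) (hfg : f = h ≫ tauV V + g) :
    (Vob V i ◁ ((f ▷ Vob V k) ≫ (concatV V 2 k).hom)) ≫ (concatV V i (2 + k)).hom ≫
        projV V (i + (2 + k)) =
      (Vob V i ◁ ((g ▷ Vob V k) ≫ (concatV V 2 k).hom)) ≫ (concatV V i (2 + k)).hom ≫
        projV V (i + (2 + k)) := by
  have hq : (Vob V i ◁ (biprod.lift h g ▷ Vob V k) - Vob V i ◁ (biprod.lift 0 g ▷ Vob V k)) ≫
      (Vob V i ◁ ((biprod.snd : V ⊞ Vob V 2 ⟶ Vob V 2) ▷ Vob V k)) = 0 := by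
    rw [Preadditive.sub_comp, ← whiskerLeft_comp, ← whiskerLeft_comp, ← comp_whiskerRight,
      ← comp_whiskerRight, biprod.lift_snd, biprod.lift_snd, sub_self]
  have key := comp_relMap_comp_projV V i k _ hq
  have expand : ∀ m : X ⟶ V ⊞ Vob V 2, (Vob V i ◁ (m ▷ Vob V k)) ≫ relMap V i k ≫
      projV V (i + (2 + k)) = (Vob V i ◁ (((m ≫ biprod.desc (tauV V) (𝟙 _)) ▷ Vob V k) ≫
        (concatV V 2 k).hom)) ≫ (concatV V i (2 + k)).hom ≫ projV V (i + (2 + k)) := by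
    intro m
    simp only [relMap, comp_whiskerRight, whiskerLeft_comp, Category.assoc]
  rw [Preadditive.sub_comp, sub_eq_zero, expand, expand, biprod.lift_desc, biprod.lift_desc,
    Category.comp_id, zero_comp, zero_add, ← hfg] at key
  exact key

lemma eqToHom_comp_projV {a b : ℕ} (h : a = b) :
    eqToHom (congrArg (Vob V) h) ≫ projV V b = projV V a ≫ eqToHom (congrArg (Vtil V) h) := by
  subst h; simp

lemma whiskerLeft_eqToHom_comp_concatV_comp_projV (i : ℕ) {a b : ℕ} (h : a = b) :
    (Vob V i ◁ eqToHom (congrArg (Vob V) h)) ≫ (concatV V i b).hom ≫ projV V (i + b) =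
      (concatV V i a).hom ≫ projV V (i + a) ≫ eqToHom (congrArg (Vtil V) (congrArg (i + ·) h)) := by
  subst h; simp

lemma whiskerLeft_headMap_comp_concatV_comp_projV (i k : ℕ) (p : Vp V ⟶ Vp V ⊗ Vp V) :
    (Vob V i ◁ headMap V k p) ≫ (concatV V i (k + 1 + 1)).hom ≫ projV V (i + (k + 1) + 1) =
      ((Vob V i ◁ headMapTwo V k (p ≫ tensorToVobTwo V)) ≫ (concatV V i (2 + k)).hom ≫
        projV V (i + (2 + k))) ≫ eqToHom (congrArg (Vtil V) (by omega)) := by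
  rw [headMap_eq_headMapTwo, whiskerLeft_comp_assoc]
  erw [whiskerLeft_eqToHom_comp_concatV_comp_projV V i (by omega : 2 + k = k + 1 + 1)]
  simp

lemma ins_comp_projV_eq_ins_succ_comp_projV {n i : ℕ} (hi : i < n) :
    ins V n i ≫ projV V (n + 1) = ins V n (i + 1) ≫ projV V (n + 1) := by
  obtain ⟨k, rfl⟩ : ∃ k, n = i + (k + 1) := ⟨n - i - 1, by omega⟩
  have h0 := ins_add V i (k + 1) 0
  rw [add_zero] at h0
  rw [h0, ins_add V i (k + 1) 1, Category.assoc, Category.assoc, Category.assoc, Category.assoc]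
  congr 1
  rw [ins_succ_zero, ins_succ_one, whiskerLeft_headMap_comp_concatV_comp_projV,
    whiskerLeft_headMap_comp_concatV_comp_projV, cancel_mono]
  refine whiskerLeft_comp_projV_eq_of_eq_comp_tauV_add V i k _ _ biprod.snd ?_
  exact eq_add_of_sub_eq ((Preadditive.sub_comp _ _ _).symm.trans (biprod_snd_comp_tauV V).symm)

lemma relMap_comp_ins_self (j m : ℕ) :
    relMap V j m ≫ ins V (j + (2 + m)) (j + (2 + m)) =
      (Vob V j ◁ ((V ⊞ Vob V 2) ◁ ins V m m)) ≫ relMap V j (m + 1) := by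
  rw [ins_add, ins_add V 2 m m]
  simp only [relMap, whiskerLeft_comp, Category.assoc, Iso.hom_inv_id_assoc,
    whiskerLeft_hom_inv_assoc]
  rw [← whiskerLeft_comp_assoc, ← whisker_exchange, whiskerLeft_comp_assoc]
  rfl

lemma rmap_comp_ins_comp_projV (j m : ℕ) :
    rmap V j m ≫ ins V (j + (2 + m)) (j + (2 + m)) ≫ projV V (j + (2 + m) + 1) = 0 := by
  have hq : (kernel.ι (Vob V j ◁ ((biprod.snd : V ⊞ Vob V 2 ⟶ Vob V 2) ▷ Vob V m)) ≫
      (Vob V j ◁ ((V ⊞ Vob V 2) ◁ ins V m m))) ≫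
      (Vob V j ◁ ((biprod.snd : V ⊞ Vob V 2 ⟶ Vob V 2) ▷ Vob V (m + 1))) = 0 := by
    rw [Category.assoc, ← whiskerLeft_comp, whisker_exchange, whiskerLeft_comp,
      kernel.condition_assoc, zero_comp]
  have h := comp_relMap_comp_projV V j (m + 1) _ hq
  rw [Category.assoc, ← reassoc_of% relMap_comp_ins_self] at h
  exact (Category.assoc _ _ _).trans h

lemma eqToHom_comp_ins_self_comp_projV {a b : ℕ} (h : a = b) :
    eqToHom (congrArg (Vob V) h) ≫ ins V b b ≫ projV V (b + 1) =
      ins V a a ≫ projV V (a + 1) ≫ eqToHom (congrArg (fun n => Vtil V (n + 1)) h) := by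
  subst h; simp

lemma bigR_comp_ins_comp_projV (n : ℕ) : bigR V n ≫ ins V n n ≫ projV V (n + 1) = 0 := by
  ext ⟨j, hj⟩
  simp only [bigR, Sigma.ι_desc_assoc, comp_zero, Category.assoc]
  rw [eqToHom_comp_ins_self_comp_projV V (by omega), reassoc_of% rmap_comp_ins_comp_projV, zero_comp]

lemma ins_comp_projV_eq_ins_self {n i : ℕ} (hi : i ≤ n) :
    ins V n i ≫ projV V (n + 1) = ins V n n ≫ projV V (n + 1) := by
  induction hi using Nat.decreasingInduction with
  | self => rfl
  | of_succ k hk ih => exact (ins_comp_projV_eq_ins_succ_comp_projV V hk).trans ih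

end Relations

theorem statement13_general {𝒜 : Type*} [Category 𝒜] [Abelian 𝒜] [MonoidalCategory 𝒜]
    (V : 𝒜) (n : ℕ) :
    ∃! e : Vtil V n ⟶ Vtil V (n + 1),
      ∀ i ≤ n, projV V n ≫ e = ins V n i ≫ projV V (n + 1) := by
  refine ⟨cokernel.desc _ _ (bigR_comp_ins_comp_projV V n), fun i hi => ?_, fun e he => ?_⟩
  · exact (cokernel.π_desc _ _ _).trans (ins_comp_projV_eq_ins_self V hi).symm
  · exact (cancel_epi (cokernel.π _)).1 ((he n le_rfl).trans (cokernel.π_desc _ _ _).symm)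

/-- in a monoidal abelian category admitting sequential colimits,
whose monoidal product preserves sequential colimits and reflexive
coequalizers, all the degeneracy maps `η_i : Vₙ ⟶ V_{n+1}` induce one and the
same map `η̃ : Ṽₙ ⟶ Ṽ_{n+1}` on the quotients. -/
theorem statement13 {𝒜 : Type*} [Category 𝒜] [Abelian 𝒜] [MonoidalCategory 𝒜]
    [HasColimitsOfShape ℕ 𝒜]
    (hrefl : ∀ X : 𝒜, PreservesReflexiveCoequalizersFun (tensorLeft X) ∧
      PreservesReflexiveCoequalizersFun (tensorRight X))
    (hseq : ∀ X : 𝒜, PreservesColimitsOfShape ℕ (tensorLeft X) ∧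
      PreservesColimitsOfShape ℕ (tensorRight X))
    (V : 𝒜) (n : ℕ) :
    ∃! e : Vtil V n ⟶ Vtil V (n + 1),
      ∀ i ≤ n, projV V n ≫ e = ins V n i ≫ projV V (n + 1) :=
  statement13_general V n
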